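/- Let K > 0, let n ≥ 0 and Ric be real numbers, and suppose v : ℝ → ℝ satisfies: the function r ↦ v(r) − K·rⁿ·(1 − (Ric/(6(n+2)))·r²) is O(r^{n+4}) as r → 0 from the right (with rⁿ = exp(n·log r) for r > 0). Then (6(n+2)/r²)·(log K + n·log r − log(v(r))) tends to Ric as r → 0 from the right. -/

import Mathlib

open Real Filter Asymptotics Topology

/-!
Put `w(r) = v(r) / (K rⁿ)`. The hypothesis says `w(r) = 1 - c r² + O(r⁴)` with
`c = Ric / (6(n+2))`, so `(w(r) - 1) / r² → -c`; since `1 - 1/w ≤ log w ≤ w - 1` and `w → 1`,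
also `log w(r) / r² → -c`. The estimator is exactly `-6(n+2) · log w(r) / r²`.
-/

theorem tendsto_div_rpow_of_isBigO_rpow {f : ℝ → ℝ} {a p : ℝ} (hap : a < p)
    (hf : f =O[𝓝[>] 0] fun r => r ^ p) :
    Tendsto (fun r => f r / r ^ a) (𝓝[>] 0) (𝓝 0) := by
  have hbig : (fun r => f r / r ^ a) =O[𝓝[>] 0] fun r => r ^ (p - a) := by
    refine (hf.mul (isBigO_refl (fun r => (r ^ a)⁻¹) _)).congr' ?_ ?_
    · exact Eventually.of_forall fun r => (div_eq_mul_inv _ _).symm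
    · filter_upwards [self_mem_nhdsWithin] with r (hr : 0 < r)
      rw [rpow_sub hr, div_eq_mul_inv]
  have hpa : 0 < p - a := sub_pos.2 hap
  have hpow : Tendsto (fun r : ℝ => r ^ (p - a)) (𝓝[>] 0) (𝓝 0) := by
    have := (continuousAt_rpow_const 0 (p - a) (Or.inr hpa.le)).tendsto
    rw [zero_rpow hpa.ne'] at this
    exact tendsto_nhdsWithin_of_tendsto_nhds this
  exact hbig.trans_tendsto hpow

theorem tendsto_of_tendsto_sub_div {α : Type*} {l : Filter α} {w s : α → ℝ} {b L : ℝ}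
    (hs : Tendsto s l (𝓝 0)) (hs_ne : ∀ᶠ x in l, s x ≠ 0)
    (h : Tendsto (fun x => (w x - b) / s x) l (𝓝 L)) :
    Tendsto w l (𝓝 b) := by
  have hprod : Tendsto (fun x => (w x - b) / s x * s x + b) l (𝓝 (L * 0 + b)) :=
    (h.mul hs).add_const b
  rw [mul_zero, zero_add] at hprod
  refine hprod.congr' ?_
  filter_upwards [hs_ne] with x hx
  rw [div_mul_cancel₀ _ hx, sub_add_cancel]

theorem tendsto_log_div_of_tendsto_sub_one_div {α : Type*} {l : Filter α} {w s : α → ℝ} {L : ℝ}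
    (hs : Tendsto s l (𝓝 0)) (hs_pos : ∀ᶠ x in l, 0 < s x)
    (h : Tendsto (fun x => (w x - 1) / s x) l (𝓝 L)) :
    Tendsto (fun x => log (w x) / s x) l (𝓝 L) := by
  have hw : Tendsto w l (𝓝 1) :=
    tendsto_of_tendsto_sub_div hs (hs_pos.mono fun _ hx => hx.ne') h
  have hw_pos : ∀ᶠ x in l, 0 < w x := hw.eventually (lt_mem_nhds one_pos)
  have hlower : Tendsto (fun x => (w x - 1) / s x / w x) l (𝓝 L) := by
    rw [← div_one L]
    exact h.div hw one_ne_zero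
  refine tendsto_of_tendsto_of_tendsto_of_le_of_le' hlower h ?_ ?_
  · filter_upwards [hs_pos, hw_pos] with x hsx hwx
    calc (w x - 1) / s x / w x = (1 - (w x)⁻¹) / s x := by field_simp
      _ ≤ log (w x) / s x := by gcongr; exact one_sub_inv_le_log_of_pos hwx
  · filter_upwards [hs_pos, hw_pos] with x hsx hwx
    gcongr
    exact log_le_sub_one_of_pos hwx

/-- Consistency of the Ricci curvature estimator: if
`v(r) = K·rⁿ·(1 − (Ric/(6(n+2)))·r²) + O(r^{n+4})` as `r → 0⁺` (with `rⁿ` the real power),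
then `(6(n+2)/r²)·(log K + n·log r − log v(r)) → Ric` as `r → 0⁺`. -/
theorem ricci_estimator_consistent (K n Ric : ℝ) (hK : 0 < K) (hn : 0 ≤ n) (v : ℝ → ℝ)
    (hv : (fun r : ℝ => v r - K * r ^ n * (1 - Ric / (6 * (n + 2)) * r ^ 2))
      =O[nhdsWithin 0 (Set.Ioi 0)] fun r : ℝ => r ^ (n + 4)) :
    Tendsto
      (fun r : ℝ =>
        6 * (n + 2) / r ^ 2 * (Real.log K + n * Real.log r - Real.log (v r)))
      (nhdsWithin 0 (Set.Ioi 0)) (nhds Ric) := by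
  set c := Ric / (6 * (n + 2))
  set w : ℝ → ℝ := fun r => v r / (K * r ^ n)
  have hpos : ∀ᶠ r in 𝓝[>] (0 : ℝ), 0 < r := self_mem_nhdsWithin
  have hsq : Tendsto (fun r : ℝ => r ^ 2) (𝓝[>] 0) (𝓝 0) :=
    tendsto_nhdsWithin_of_tendsto_nhds (by simpa using (continuous_pow 2).tendsto (0 : ℝ))
  have hquad : Tendsto (fun r => (w r - 1) / r ^ 2) (𝓝[>] 0) (𝓝 (-c)) := by
    have herr := tendsto_div_rpow_of_isBigO_rpow (by linarith : n + 2 < n + 4)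
      (hv.const_mul_left K⁻¹)
    rw [← zero_add (-c)]
    refine (herr.add_const (-c)).congr' ?_
    filter_upwards [hpos] with r hr
    have hrn : 0 < r ^ n := rpow_pos_of_pos hr n
    simp only [w]
    rw [rpow_add hr, rpow_two]
    field_simp
    ring
  have hsq_pos : ∀ᶠ r in 𝓝[>] (0 : ℝ), 0 < r ^ 2 := hpos.mono fun r hr => by positivity
  have hlog := tendsto_log_div_of_tendsto_sub_one_div hsq hsq_pos hquad
  have hw_pos : ∀ᶠ r in 𝓝[>] (0 : ℝ), 0 < w r :=
    (tendsto_of_tendsto_sub_div hsq (hsq_pos.mono fun _ h => h.ne') hquad).eventually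
      (lt_mem_nhds one_pos)
  have hRic : -(6 * (n + 2)) * -c = Ric := by
    rw [neg_mul_neg]
    exact mul_div_cancel₀ _ (by positivity)
  refine (hRic ▸ hlog.const_mul (-(6 * (n + 2)))).congr' ?_
  filter_upwards [hpos, hw_pos] with r hr hwr
  have hrn : 0 < r ^ n := rpow_pos_of_pos hr n
  have hv_eq : v r = K * r ^ n * w r := by simp only [w]; field_simp
  rw [hv_eq, log_mul (by positivity) hwr.ne', log_mul hK.ne' hrn.ne', log_rpow hr]
  ring
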